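/- arXiv:1911.00538 — 5 statements merged into one kernel-verified Lean document; each statement's English description precedes it below -/
import Mathlib

section
/- Let $P = (\theta^*_{z^*_1},\dots,\theta^*_{z^*_n}) \in \mathbb{R}^{p\times n}$ with each cluster nonempty, and let $P = U\Sigma V^T$ be an SVD of $P$ with $V \in \mathbb{R}^{n\times k}$ having orthonormal columns spanning the row space of $P$. Then there exists an orthogonal matrix $W \in \mathbb{R}^{k\times k}$ such that $V = Z^* D^{-1/2} W$; in particular, the $i$-th and $j$-th rows of $V$ coincide whenever $z^*_i = z^*_j$. -/
/-!
Every row of `P` is constant on each cluster, hence so is every vector in its row space, in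
particular every column of `V`. Thus `V = Z * V'` for the matrix `V'` of cluster representatives,
and since `Zᵀ * Z = D` the matrix `W := D^{1/2} * V'` satisfies `Wᵀ * W = Vᵀ * V = 1` and
`Z * D^{-1/2} * W = Z * V' = V`.
-/

open Matrix Finset

theorem apply_eq_of_mem_span_range {R m n : Type*} [Semiring R] {P : m → n → R} {i i' : n}
    (hP : ∀ x, P x i = P x i') {v : n → R} (hv : v ∈ Submodule.span R (Set.range P)) :
    v i = v i' :=
  (Submodule.span_le (p := LinearMap.eqLocus (LinearMap.proj (R := R) (φ := fun _ : n => R) i)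
    (LinearMap.proj i'))).mpr (Set.range_subset_iff.mpr hP) hv

section MembershipMatrix

variable {R n k m : Type*} [DecidableEq k]

variable (R) in
def membershipMatrix [Zero R] [One R] (z : n → k) : Matrix n k R :=
  of fun i j => if z i = j then 1 else 0

theorem membershipMatrix_mul [Fintype k] [NonAssocSemiring R] (z : n → k) (M : Matrix k m R) :
    membershipMatrix R z * M = M.submatrix z id := by
  ext i j
  simp [membershipMatrix, Matrix.mul_apply]

theorem membershipMatrix_transpose_mul_self [Fintype n] [NonAssocSemiring R] (z : n → k) :
    (membershipMatrix R z)ᵀ * membershipMatrix R z =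
      diagonal fun j => (#{i | z i = j} : R) := by
  ext a b
  simp only [membershipMatrix, Matrix.mul_apply, transpose_apply, of_apply, mul_ite, mul_one,
    mul_zero, ← ite_and, sum_boole, diagonal_apply]
  split_ifs with hab
  · simp [hab]
  · rw [filter_false_of_mem fun i _ h => hab (h.2.symm.trans h.1), card_empty, Nat.cast_zero]

theorem eq_membershipMatrix_mul_submatrix [Fintype k] [NonAssocSemiring R] {z : n → k}
    {rep : k → n} (hrep : Function.RightInverse rep z) {V : Matrix n m R}
    (hV : ∀ i i', z i = z i' → V i = V i') :
    V = membershipMatrix R z * V.submatrix rep id := by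
  rw [membershipMatrix_mul]
  ext i j
  exact congrFun (hV i (rep (z i)) (hrep (z i)).symm) j

theorem transpose_mul_self_membershipMatrix_mul [Fintype n] [Fintype k] (z : n → k)
    (M : Matrix k m ℝ) :
    (membershipMatrix ℝ z * M)ᵀ * (membershipMatrix ℝ z * M) =
      (diagonal (fun j => √(#{i | z i = j} : ℝ)) * M)ᵀ *
        (diagonal (fun j => √(#{i | z i = j} : ℝ)) * M) := by
  simp only [Matrix.transpose_mul, diagonal_transpose, Matrix.mul_assoc]
  rw [← Matrix.mul_assoc (membershipMatrix ℝ z)ᵀ, membershipMatrix_transpose_mul_self,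
    ← Matrix.mul_assoc (diagonal _), diagonal_mul_diagonal]
  simp only [Real.mul_self_sqrt (Nat.cast_nonneg _)]

end MembershipMatrix

theorem right_singular_vectors_structure_general (p n k : ℕ)
    (z : Fin n → Fin k) (hne : ∀ j : Fin k, ∃ i, z i = j)
    (θ : Fin k → Fin p → ℝ)
    (P : Matrix (Fin p) (Fin n) ℝ) (hP : ∀ x i, P x i = θ (z i) x)
    (V : Matrix (Fin n) (Fin k) ℝ)
    (hVorth : Vᵀ * V = 1)
    -- the columns of V span (hence lie in) the row space of P
    (hspan : ∀ j : Fin k, (fun i => V i j) ∈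
      Submodule.span ℝ (Set.range fun x : Fin p => fun i => P x i))
    (Z : Matrix (Fin n) (Fin k) ℝ)
    (hZ : ∀ i j, Z i j = if z i = j then 1 else 0) :
    ∃ W : Matrix (Fin k) (Fin k) ℝ, Wᵀ * W = 1 ∧
      V = Z * (Matrix.diagonal fun j =>
        (Real.sqrt ((Finset.univ.filter fun i => z i = j).card : ℝ))⁻¹) * W ∧
      ∀ i i' : Fin n, z i = z i' → (fun j => V i j) = (fun j => V i' j) := by
  obtain rfl : Z = membershipMatrix ℝ z := Matrix.ext hZ
  have hrows : ∀ i i', z i = z i' → V i = V i' := fun i i' h => funext fun j =>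
    apply_eq_of_mem_span_range (fun x => by rw [hP, hP, h]) (hspan j)
  choose rep hrep using hne
  have hV := eq_membershipMatrix_mul_submatrix hrep hrows
  set s : Fin k → ℝ := fun j => √(#{i | z i = j} : ℝ)
  have hs : diagonal (fun j => (s j)⁻¹) * diagonal s = 1 := by
    rw [diagonal_mul_diagonal, ← diagonal_one]
    congr 1
    funext j
    refine inv_mul_cancel₀ (Real.sqrt_ne_zero'.mpr (Nat.cast_pos.mpr (card_pos.mpr ?_)))
    exact ⟨rep j, by simp [hrep j]⟩
  refine ⟨diagonal s * V.submatrix rep id, ?_, ?_, hrows⟩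
  · rw [← transpose_mul_self_membershipMatrix_mul, ← hV, hVorth]
  · rw [Matrix.mul_assoc, ← Matrix.mul_assoc (diagonal _), hs, Matrix.one_mul, ← hV]

theorem right_singular_vectors_structure (p n k : ℕ)
    (z : Fin n → Fin k) (hne : ∀ j : Fin k, ∃ i, z i = j)
    (θ : Fin k → Fin p → ℝ)
    (P : Matrix (Fin p) (Fin n) ℝ) (hP : ∀ x i, P x i = θ (z i) x)
    (U : Matrix (Fin p) (Fin k) ℝ) (σ : Fin k → ℝ) (hσnn : ∀ l, 0 ≤ σ l)
    (V : Matrix (Fin n) (Fin k) ℝ)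
    (hUorth : Uᵀ * U = 1) (hVorth : Vᵀ * V = 1)
    (hSVD : P = U * Matrix.diagonal σ * Vᵀ)
    -- the columns of V span (hence lie in) the row space of P
    (hspan : ∀ j : Fin k, (fun i => V i j) ∈
      Submodule.span ℝ (Set.range fun x : Fin p => fun i => P x i))
    (Z : Matrix (Fin n) (Fin k) ℝ)
    (hZ : ∀ i j, Z i j = if z i = j then 1 else 0) :
    ∃ W : Matrix (Fin k) (Fin k) ℝ, Wᵀ * W = 1 ∧
      V = Z * (Matrix.diagonal fun j =>
        (Real.sqrt ((Finset.univ.filter fun i => z i = j).card : ℝ))⁻¹) * W ∧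
      ∀ i i' : Fin n, z i = z i' → (fun j => V i j) = (fun j => V i' j) :=
  right_singular_vectors_structure_general p n k z hne θ P hP V hVorth hspan Z hZ
end

section
/- Let $V \in \mathbb{R}^{n\times k}$ be the matrix of right singular vectors of $P = (\theta^*_{z^*_1},\dots,\theta^*_{z^*_n})$ (rank at most $k$). If every cluster has size at least $\beta n / k$, then for every $i \in [n]$, $\|V^T e_i\| \leq \sqrt{k/(\beta n)}$. -/
open Matrix Finset

noncomputable def vnorm {ι : Type*} [Fintype ι] (v : ι → ℝ) : ℝ :=
  Real.sqrt (∑ i, v i ^ 2)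

theorem Submodule.apply_eq_apply_of_mem_span_range_comp {R ι κ β : Type*} [CommSemiring R]
    {z : ι → κ} {f : β → κ → R} {v : ι → R}
    (hv : v ∈ Submodule.span R (Set.range fun x a => f x (z a))) {a b : ι} (hab : z a = z b) :
    v a = v b := by
  have hle : Submodule.span R (Set.range fun x a => f x (z a)) ≤ LinearMap.range
      (LinearMap.funLeft R R z) :=
    Submodule.span_le.mpr (Set.range_subset_iff.mpr fun x => ⟨f x, rfl⟩)
  obtain ⟨g, rfl⟩ := hle hv
  simp [LinearMap.funLeft, hab]

/-- The vector `w = V *ᵥ V i` has `w ⬝ᵥ w = t := V i ⬝ᵥ V i` and `w a = t` for `a ∈ s`,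
whence `#s * t² ≤ t`. -/
theorem Matrix.card_mul_dotProduct_self_le_one_of_rows_eq
    {R m n : Type*} [Field R] [LinearOrder R] [IsStrictOrderedRing R]
    [Fintype m] [Fintype n] [DecidableEq n] {V : Matrix m n R} (hV : Vᵀ * V = 1)
    {s : Finset m} {i : m} (hs : ∀ a ∈ s, V a = V i) :
    (#s : R) * (V i ⬝ᵥ V i) ≤ 1 := by
  set t := V i ⬝ᵥ V i
  set w := V *ᵥ V i
  have hw_self : w ⬝ᵥ w = t := by
    rw [dotProduct_mulVec, ← mulVec_transpose, mulVec_mulVec, hV, one_mulVec]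
  have hw_apply : ∀ a ∈ s, w a = t := fun a ha => by
    simp only [w, mulVec, hs a ha, t]
  have ht : 0 ≤ t := sum_nonneg fun j _ => mul_self_nonneg (V i j)
  have hst : (#s : R) * t ^ 2 ≤ t :=
    calc (#s : R) * t ^ 2 = ∑ a ∈ s, w a * w a := by
          rw [sum_congr rfl fun a ha => by rw [hw_apply a ha], sum_const, nsmul_eq_mul, sq]
      _ ≤ ∑ a, w a * w a :=
          sum_le_sum_of_subset_of_nonneg (subset_univ s) fun a _ _ => mul_self_nonneg (w a)
      _ = t := hw_self
  rcases ht.eq_or_lt with ht0 | ht_pos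
  · simp [← ht0]
  · exact le_of_mul_le_mul_right (by linarith) ht_pos

theorem row_norm_of_singular_vectors (p n k : ℕ) (β : ℝ) (hβ0 : 0 < β)
    (z : Fin n → Fin k) (θ : Fin k → Fin p → ℝ)
    (hsize : ∀ j : Fin k,
      β * n / k ≤ ((Finset.univ.filter fun i => z i = j).card : ℝ))
    (P : Matrix (Fin p) (Fin n) ℝ) (hP : ∀ x i, P x i = θ (z i) x)
    (V : Matrix (Fin n) (Fin k) ℝ) (hVorth : Vᵀ * V = 1)
    -- the columns of V lie in the row space of P
    (hspan : ∀ j : Fin k, (fun i => V i j) ∈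
      Submodule.span ℝ (Set.range fun x : Fin p => fun i => P x i)) :
    ∀ i : Fin n, vnorm (fun j => V i j) ≤ Real.sqrt (k / (β * n)) := by
  intro i
  have hk : 0 < k := (z i).pos
  have hn : 0 < n := i.pos
  simp only [hP] at hspan
  have hcluster : ∀ a ∈ univ.filter fun a => z a = z i, V a = V i := fun a ha =>
    funext fun j => Submodule.apply_eq_apply_of_mem_span_range_comp
      (f := fun x c => θ c x) (hspan j) (mem_filter.1 ha).2
  have hbound := card_mul_dotProduct_self_le_one_of_rows_eq hVorth hcluster
  have hsize_pos : 0 < β * n / k := by positivity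
  have hcard_pos := hsize_pos.trans_le (hsize (z i))
  rw [vnorm]
  refine Real.sqrt_le_sqrt ?_
  calc ∑ j, V i j ^ 2 = V i ⬝ᵥ V i := by simp only [dotProduct, sq]
    _ ≤ 1 / #(univ.filter fun a => z a = z i) := by rw [le_div_iff₀ hcard_pos]; linarith
    _ ≤ 1 / (β * n / k) := one_div_le_one_div_of_le hsize_pos (hsize (z i))
    _ = k / (β * n) := one_div_div _ _
end

section
/- Let $P = U \Sigma V^T$ be the SVD of $P = (\theta^*_{z^*_1},\dots,\theta^*_{z^*_n})$ with singular values $\sigma_1 \geq \dots \geq \sigma_k$ and left singular vectors $u_1,\dots,u_k$. If every cluster has size at least $\beta n / k$, then for all $j, l \in [k]$, $|\langle u_l, \theta^*_j \rangle| \leq \sigma_l \sqrt{k/(\beta n)}$. -/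
/-! Multiplying the SVD on the left by `Uᵀ` gives `Uᵀ P = Σ Vᵀ`, so the `(l, i)` entry
`⟪u_l, θ*_{z*_i}⟫` equals `σ_l V_{il}`. This value is the same for all `i` in cluster `j`,
and the `l`-th column of `V` is a unit vector, so
`|⟪u_l, θ*_j⟫|² · |cluster j| ≤ σ_l² ∑ᵢ V_{il}² = σ_l²`. -/

open Matrix Finset

variable {m n r : Type*}

theorem Matrix.transpose_mul_eq_diagonal_mul_of_eq {R : Type*} [Semiring R] [Fintype m]
    [Fintype r] [DecidableEq r] {U : Matrix m r R} {V : Matrix n r R} {σ : r → R}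
    {P : Matrix m n R} (hU : Uᵀ * U = 1) (hP : P = U * diagonal σ * Vᵀ) :
    Uᵀ * P = diagonal σ * Vᵀ := by
  rw [hP, ← Matrix.mul_assoc, ← Matrix.mul_assoc, hU, Matrix.one_mul]

theorem Matrix.sum_sq_apply_eq_one_of_transpose_mul_self [Fintype n] [DecidableEq r]
    {V : Matrix n r ℝ} (hV : Vᵀ * V = 1) (l : r) : ∑ i, V i l ^ 2 = 1 := by
  simpa [mul_apply, sq] using congrFun (congrFun hV l) l

theorem Matrix.card_mul_sq_le_of_svd [Fintype m] [Fintype n] [Fintype r] [DecidableEq r]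
    {U : Matrix m r ℝ} {V : Matrix n r ℝ} {σ : r → ℝ}
    {P : Matrix m n ℝ} (hU : Uᵀ * U = 1) (hV : Vᵀ * V = 1) (hP : P = U * diagonal σ * Vᵀ)
    (l : r) {S : Finset n} {c : ℝ} (hc : ∀ i ∈ S, (Uᵀ * P) l i = c) :
    #S * c ^ 2 ≤ σ l ^ 2 := by
  have hentry : ∀ i, (Uᵀ * P) l i = σ l * V i l := fun i => by
    simp [transpose_mul_eq_diagonal_mul_of_eq hU hP, diagonal_mul]
  calc (#S : ℝ) * c ^ 2 = ∑ i ∈ S, (σ l * V i l) ^ 2 := by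
        rw [sum_congr rfl fun i hi => by rw [← hentry, hc i hi], sum_const, nsmul_eq_mul]
    _ ≤ ∑ i, (σ l * V i l) ^ 2 :=
        sum_le_sum_of_subset_of_nonneg (subset_univ S) fun i _ _ => sq_nonneg _
    _ = σ l ^ 2 := by
        simp_rw [mul_pow, ← mul_sum, sum_sq_apply_eq_one_of_transpose_mul_self hV, mul_one]

theorem abs_le_mul_sqrt_inv_of_mul_sq_le {c s d : ℝ} (hd : 0 < d) (hs : 0 ≤ s)
    (h : d * c ^ 2 ≤ s ^ 2) : |c| ≤ s * √d⁻¹ := by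
  have hc : c ^ 2 ≤ s ^ 2 * d⁻¹ := by
    rw [← div_eq_mul_inv, le_div_iff₀ hd]
    linarith
  calc |c| = √(c ^ 2) := (Real.sqrt_sq_eq_abs c).symm
    _ ≤ √(s ^ 2 * d⁻¹) := Real.sqrt_le_sqrt hc
    _ = s * √d⁻¹ := by rw [Real.sqrt_mul (sq_nonneg s), Real.sqrt_sq hs]

theorem center_singular_vector_inner_product_bound_general (p n k : ℕ) (hn : 1 ≤ n)
    (β : ℝ) (hβ0 : 0 < β)
    (z : Fin n → Fin k) (θ : Fin k → Fin p → ℝ)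
    (hsize : ∀ j : Fin k,
      β * n / k ≤ ((Finset.univ.filter fun i => z i = j).card : ℝ))
    (P : Matrix (Fin p) (Fin n) ℝ) (hP : ∀ x i, P x i = θ (z i) x)
    (σ : Fin k → ℝ) (hσnn : ∀ l, 0 ≤ σ l)
    (U : Matrix (Fin p) (Fin k) ℝ) (V : Matrix (Fin n) (Fin k) ℝ)
    (hUorth : Uᵀ * U = 1) (hVorth : Vᵀ * V = 1)
    (hSVD : P = U * Matrix.diagonal σ * Vᵀ) :
    ∀ j l : Fin k, |∑ x, U x l * θ j x| ≤ σ l * Real.sqrt (k / (β * n)) := by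
  intro j l
  have hk : (0 : ℝ) < k := by exact_mod_cast j.pos
  have hn' : (0 : ℝ) < n := by exact_mod_cast hn
  have hcluster : ∀ i ∈ univ.filter fun i => z i = j, (Uᵀ * P) l i = ∑ x, U x l * θ j x :=
    fun i hi => by simp [mul_apply, hP, (mem_filter.mp hi).2]
  have hcard := card_mul_sq_le_of_svd hUorth hVorth hSVD l hcluster
  rw [← inv_div]
  exact abs_le_mul_sqrt_inv_of_mul_sq_le (by positivity) (hσnn l)
    ((mul_le_mul_of_nonneg_right (hsize j) (sq_nonneg _)).trans hcard)

theorem center_singular_vector_inner_product_bound (p n k : ℕ) (hn : 1 ≤ n)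
    (β : ℝ) (hβ0 : 0 < β)
    (z : Fin n → Fin k) (θ : Fin k → Fin p → ℝ)
    (hsize : ∀ j : Fin k,
      β * n / k ≤ ((Finset.univ.filter fun i => z i = j).card : ℝ))
    (P : Matrix (Fin p) (Fin n) ℝ) (hP : ∀ x i, P x i = θ (z i) x)
    (σ : Fin k → ℝ) (hσnn : ∀ l, 0 ≤ σ l)
    (hσmono : ∀ l l' : Fin k, l ≤ l' → σ l' ≤ σ l)
    (U : Matrix (Fin p) (Fin k) ℝ) (V : Matrix (Fin n) (Fin k) ℝ)
    (hUorth : Uᵀ * U = 1) (hVorth : Vᵀ * V = 1)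
    (hSVD : P = U * Matrix.diagonal σ * Vᵀ)
    -- the columns of V lie in the row space of P
    (hspan : ∀ j : Fin k, (fun i => V i j) ∈
      Submodule.span ℝ (Set.range fun x : Fin p => fun i => P x i)) :
    ∀ j l : Fin k, |∑ x, U x l * θ j x| ≤ σ l * Real.sqrt (k / (β * n)) :=
  center_singular_vector_inner_product_bound_general p n k hn β hβ0 z θ hsize P hP σ hσnn U V hUorth
    hVorth hSVD
end

section
/- If $\hat P$ is the best rank-$k$ approximation (in operator norm, via truncated SVD) of $X = P + E$, where $P$ has rank at most $k$, then $\|\hat P - P\|_F \leq 2\sqrt{2k}\,\|E\|_{op}$. -/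
open Matrix Finset

noncomputable def opNorm {m n : Type*} [Fintype m] [Fintype n]
    (A : Matrix m n ℝ) : ℝ :=
  ⨆ v : {v : n → ℝ // vnorm v ≤ 1}, vnorm (A.mulVec v)

noncomputable def frobNorm {m n : Type*} [Fintype m] [Fintype n]
    (A : Matrix m n ℝ) : ℝ :=
  Real.sqrt (∑ i, ∑ j, A i j ^ 2)

/-!
`P̂ - P` has operator norm at most `‖P̂ - X‖ + ‖X - P‖ ≤ 2‖X - P‖ = 2‖E‖` and rank at most
`2k`. For any matrix `A`, the squared Frobenius norm is the trace of `Aᴴ A`, i.e. the sum of its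
eigenvalues; each of these is at most `‖A‖²` and exactly `rank A` of them are nonzero, so
`‖A‖_F ≤ √(rank A) ‖A‖`.
-/

namespace Matrix

theorem rank_add_le {m n K : Type*} [Fintype n] [Field K] (A B : Matrix m n K) :
    (A + B).rank ≤ A.rank + B.rank := by
  rw [rank, rank, rank, mulVecLin_add]
  exact (Submodule.finrank_mono (LinearMap.range_add_le _ _)).trans
    (Submodule.finrank_add_le_finrank_add_finrank _ _)

theorem rank_neg {m n K : Type*} [Fintype n] [CommRing K] (A : Matrix m n K) :
    (-A).rank = A.rank := by
  have : (-A).mulVecLin = -A.mulVecLin := by ext; simp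
  rw [rank, rank, this, LinearMap.range_neg]

theorem rank_sub_le {m n K : Type*} [Fintype n] [Field K] (A B : Matrix m n K) :
    (A - B).rank ≤ A.rank + B.rank := by
  simpa [sub_eq_add_neg, rank_neg] using rank_add_le A (-B)

section L2OpNorm

variable {𝕜 m n : Type*} [RCLike 𝕜] [Fintype m] [Fintype n] [DecidableEq n]
open scoped Matrix.Norms.L2Operator ComplexOrder

theorem eigenvalues_conjTranspose_mul_self_le (A : Matrix m n 𝕜) (i : n) :
    (isHermitian_conjTranspose_mul_self A).eigenvalues i ≤ ‖A‖ ^ 2 := by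
  set v := (isHermitian_conjTranspose_mul_self A).eigenvectorBasis i
  set w := (EuclideanSpace.equiv m 𝕜).symm (A *ᵥ v)
  have hw : ‖w‖ ≤ ‖A‖ := by
    have hv : ‖v‖ = 1 := (isHermitian_conjTranspose_mul_self A).eigenvectorBasis.orthonormal.1 i
    exact (l2_opNorm_mulVec A v).trans_eq (by rw [hv, mul_one])
  rw [IsHermitian.eigenvalues_eq, ← mulVec_mulVec, dotProduct_mulVec, ← star_mulVec]
  change RCLike.re (star w.ofLp ⬝ᵥ w.ofLp) ≤ _
  rw [dotProduct_comm, ← EuclideanSpace.inner_eq_star_dotProduct, inner_self_eq_norm_sq]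
  gcongr

theorem sum_sum_norm_sq_eq_sum_eigenvalues (A : Matrix m n 𝕜) :
    ∑ i, ∑ j, ‖A i j‖ ^ 2 = ∑ j, (isHermitian_conjTranspose_mul_self A).eigenvalues j := by
  have h := congrArg RCLike.re (isHermitian_conjTranspose_mul_self A).trace_eq_sum_eigenvalues
  simp only [trace, diag, mul_apply, conjTranspose_apply, RCLike.star_def, RCLike.conj_mul,
    map_sum] at h
  rw [Finset.sum_comm]
  exact_mod_cast h

theorem sum_sum_norm_sq_le_rank_mul_l2_opNorm_sq (A : Matrix m n 𝕜) :
    ∑ i, ∑ j, ‖A i j‖ ^ 2 ≤ A.rank * ‖A‖ ^ 2 := by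
  have hB := isHermitian_conjTranspose_mul_self A
  rw [sum_sum_norm_sq_eq_sum_eigenvalues, ← sum_filter_ne_zero, ← rank_conjTranspose_mul_self,
    hB.rank_eq_card_non_zero_eigs, Fintype.card_subtype]
  calc _ ≤ ∑ j ∈ univ.filter (fun j => hB.eigenvalues j ≠ 0), ‖A‖ ^ 2 :=
        sum_le_sum fun j _ => eigenvalues_conjTranspose_mul_self_le A j
    _ = _ := by rw [sum_const, nsmul_eq_mul]

end L2OpNorm

end Matrix

section

variable {m n : Type*} [Fintype m] [Fintype n]
open scoped Matrix.Norms.L2Operator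

theorem vnorm_eq_norm (v : n → ℝ) : vnorm v = ‖(WithLp.toLp 2 v : EuclideanSpace ℝ n)‖ := by
  simp [vnorm, EuclideanSpace.norm_eq]

theorem opNorm_nonneg (A : Matrix m n ℝ) : 0 ≤ opNorm A :=
  Real.iSup_nonneg fun _ => Real.sqrt_nonneg _

theorem opNorm_eq_l2_opNorm [DecidableEq n] (A : Matrix m n ℝ) : opNorm A = ‖A‖ := by
  have hle (v : {v : n → ℝ // vnorm v ≤ 1}) : vnorm (A *ᵥ v) ≤ ‖A‖ := by
    have hv : ‖(WithLp.toLp 2 v.1 : EuclideanSpace ℝ n)‖ ≤ 1 := by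
      rw [← vnorm_eq_norm]; exact v.2
    rw [vnorm_eq_norm]
    exact (l2_opNorm_mulVec A (WithLp.toLp 2 v.1)).trans (mul_le_of_le_one_right (norm_nonneg A) hv)
  have : Nonempty {v : n → ℝ // vnorm v ≤ 1} := ⟨⟨0, by simp [vnorm]⟩⟩
  have hbdd : BddAbove (Set.range fun v : {v : n → ℝ // vnorm v ≤ 1} => vnorm (A *ᵥ v)) :=
    ⟨‖A‖, by rintro _ ⟨v, rfl⟩; exact hle v⟩
  refine le_antisymm (ciSup_le hle)
    (ContinuousLinearMap.opNorm_le_of_unit_norm (opNorm_nonneg A) fun x hx => ?_)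
  refine le_ciSup_of_le hbdd ⟨x.ofLp, by rw [vnorm_eq_norm]; simp [hx]⟩ ?_
  rw [vnorm_eq_norm]
  rfl

theorem opNorm_sub_le_two_mul_of_le {A B C : Matrix m n ℝ}
    (h : opNorm (A - C) ≤ opNorm (B - C)) : opNorm (A - B) ≤ 2 * opNorm (C - B) := by
  classical
  simp only [opNorm_eq_l2_opNorm] at h ⊢
  calc ‖A - B‖ ≤ ‖A - C‖ + ‖C - B‖ := norm_sub_le_norm_sub_add_norm_sub A C B
    _ ≤ ‖B - C‖ + ‖C - B‖ := by gcongr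
    _ = 2 * ‖C - B‖ := by rw [norm_sub_rev B C]; ring

theorem frobNorm_le_sqrt_rank_mul_opNorm (A : Matrix m n ℝ) :
    frobNorm A ≤ √A.rank * opNorm A := by
  classical
  rw [opNorm_eq_l2_opNorm, frobNorm, ← Real.sqrt_sq (norm_nonneg A),
    ← Real.sqrt_mul (Nat.cast_nonneg _)]
  exact Real.sqrt_le_sqrt (by
    simpa [Real.norm_eq_abs, sq_abs] using sum_sum_norm_sq_le_rank_mul_l2_opNorm_sq A)

end

theorem best_rank_k_approx_frobenius_bound (p n k : ℕ)
    (X P E Phat : Matrix (Fin p) (Fin n) ℝ)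
    (hX : X = P + E) (hrankP : P.rank ≤ k) (hrankPhat : Phat.rank ≤ k)
    (hbest : opNorm (Phat - X) ≤ opNorm (P - X)) :
    frobNorm (Phat - P) ≤ 2 * Real.sqrt (2 * k) * opNorm E := by
  subst hX
  have hop : opNorm (Phat - P) ≤ 2 * opNorm E := by
    simpa using opNorm_sub_le_two_mul_of_le hbest
  have hrank : ((Phat - P).rank : ℝ) ≤ 2 * k := by
    exact_mod_cast (rank_sub_le Phat P).trans (by omega)
  calc frobNorm (Phat - P) ≤ √(Phat - P).rank * opNorm (Phat - P) :=
        frobNorm_le_sqrt_rank_mul_opNorm _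
    _ ≤ √(2 * k) * (2 * opNorm E) :=
        mul_le_mul (Real.sqrt_le_sqrt hrank) hop (opNorm_nonneg _) (Real.sqrt_nonneg _)
    _ = 2 * √(2 * k) * opNorm E := by ring
end

section
/- Let $\hat\Theta, P \in \mathbb{R}^{p\times n}$ where the columns of $P$ take at most $k$ distinct values $\theta^*_1,\dots,\theta^*_k$ (with $P_{\cdot i} = \theta^*_{z^*_i}$) that are pairwise at distance at least $\Delta$, each value attained at least $\beta n/k$ times. Suppose the columns of $\hat\Theta$ take at most $k$ values $\hat\theta_1,\dots,\hat\theta_k$ (with $\hat\Theta_{\cdot i} = \hat\theta_{\hat z_i}$) and $\|\hat\Theta - P\|_F^2 < \frac{\beta n}{2k} \cdot \frac{\Delta^2}{4}$. Then there exists a bijection $\phi : [k] \to [k]$ such that the set $S = \{i : \|\hat\theta_{\hat z_i} - \theta^*_{z^*_i}\| > \Delta/2\}$ satisfies $\hat z_i = \phi(z^*_i)$ for all $i \notin S$, and $|S| \leq 4\|\hat\Theta - P\|_F^2 / \Delta^2$. -/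
open Matrix Finset

lemma vnorm_eq {ι : Type*} [Fintype ι] (v : ι → ℝ) :
    vnorm v = ‖(WithLp.toLp 2 v : EuclideanSpace ℝ ι)‖ := by
  simp [vnorm, EuclideanSpace.norm_eq, Real.norm_eq_abs, sq_abs]

lemma vnorm_nonneg {ι : Type*} [Fintype ι] (v : ι → ℝ) : 0 ≤ vnorm v :=
  Real.sqrt_nonneg _

lemma vnorm_sq {ι : Type*} [Fintype ι] (v : ι → ℝ) :
    vnorm v ^ 2 = ∑ i, v i ^ 2 :=
  Real.sq_sqrt (Finset.sum_nonneg fun _ _ => sq_nonneg _)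

lemma vnorm_sub_comm {ι : Type*} [Fintype ι] (u v : ι → ℝ) :
    vnorm (fun x => u x - v x) = vnorm (fun x => v x - u x) := by
  unfold vnorm
  congr 1
  exact Finset.sum_congr rfl fun i _ => by ring

lemma vnorm_triangle {ι : Type*} [Fintype ι] (a b c : ι → ℝ) :
    vnorm (fun x => a x - c x)
      ≤ vnorm (fun x => a x - b x) + vnorm (fun x => b x - c x) := by
  have h := dist_triangle (WithLp.toLp 2 a : EuclideanSpace ℝ ι)
    (WithLp.toLp 2 b : EuclideanSpace ℝ ι) (WithLp.toLp 2 c : EuclideanSpace ℝ ι)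
  rw [dist_eq_norm, dist_eq_norm, dist_eq_norm] at h
  rw [vnorm_eq, vnorm_eq, vnorm_eq]
  exact h

theorem misclustering_from_center_closeness (p n k : ℕ) (Δ β : ℝ)
    (hΔ : 0 < Δ) (hβ : 0 < β)
    (zstar zhat : Fin n → Fin k)
    (θstar θhat : Fin k → Fin p → ℝ)
    (hsep : ∀ j l : Fin k, j ≠ l → Δ ≤ vnorm (θstar j - θstar l))
    (hsize : ∀ j : Fin k,
      β * n / k ≤ ((Finset.univ.filter fun i => zstar i = j).card : ℝ))
    (hclose : ∑ i, ∑ x, (θhat (zhat i) x - θstar (zstar i) x) ^ 2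
        < (β * n / (2 * k)) * (Δ ^ 2 / 4)) :
    ∃ φ : Equiv.Perm (Fin k),
      (∀ i : Fin n,
        vnorm (fun x => θhat (zhat i) x - θstar (zstar i) x) ≤ Δ / 2 →
          zhat i = φ (zstar i)) ∧
      (((Finset.univ.filter fun i =>
          Δ / 2 < vnorm (fun x => θhat (zhat i) x - θstar (zstar i) x)).card : ℝ)
        ≤ 4 * (∑ i, ∑ x, (θhat (zhat i) x - θstar (zstar i) x) ^ 2) / Δ ^ 2) := by
  have hcost_nonneg : (0:ℝ) ≤ ∑ i, ∑ x, (θhat (zhat i) x - θstar (zstar i) x) ^ 2 :=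
    Finset.sum_nonneg fun i _ => Finset.sum_nonneg fun x _ => sq_nonneg _
  have hBpos : (0:ℝ) < (β * n / (2 * k)) * (Δ ^ 2 / 4) := lt_of_le_of_lt hcost_nonneg hclose
  -- Step 1: every true cluster has an estimated center strictly within Δ/2
  have hall : ∀ l : Fin k, ∃ a : Fin k, vnorm (fun x => θhat a x - θstar l x) < Δ / 2 := by
    by_contra hcon
    push_neg at hcon
    obtain ⟨m, hm⟩ := hcon
    have key : ∀ i ∈ Finset.univ.filter (fun i => zstar i = m),
        Δ ^ 2 / 4 ≤ ∑ x, (θhat (zhat i) x - θstar (zstar i) x) ^ 2 := by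
      intro i hi
      simp only [Finset.mem_filter] at hi
      have h1 := hm (zhat i)
      have h2 : (Δ/2)^2 ≤ (vnorm (fun x => θhat (zhat i) x - θstar m x))^2 :=
        pow_le_pow_left₀ (by linarith) h1 2
      rw [vnorm_sq] at h2
      rw [hi.2]
      calc Δ ^ 2 / 4 = (Δ/2)^2 := by ring
        _ ≤ _ := h2
    have hsum : ((Finset.univ.filter (fun i => zstar i = m)).card : ℝ) * (Δ ^ 2 / 4)
        ≤ ∑ i, ∑ x, (θhat (zhat i) x - θstar (zstar i) x) ^ 2 := by
      calc ((Finset.univ.filter (fun i => zstar i = m)).card : ℝ) * (Δ ^ 2 / 4)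
          ≤ ∑ i ∈ Finset.univ.filter (fun i => zstar i = m),
              ∑ x, (θhat (zhat i) x - θstar (zstar i) x) ^ 2 := by
            have := Finset.card_nsmul_le_sum
              (Finset.univ.filter (fun i => zstar i = m))
              (fun i => ∑ x, (θhat (zhat i) x - θstar (zstar i) x) ^ 2)
              (Δ ^ 2 / 4) key
            rwa [nsmul_eq_mul] at this
        _ ≤ _ := Finset.sum_le_sum_of_subset_of_nonneg (Finset.subset_univ _)
              (fun i _ _ => Finset.sum_nonneg fun x _ => sq_nonneg _)
    have hsz := hsize m
    have h3 : β * n / k * (Δ ^ 2 / 4)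
        ≤ ∑ i, ∑ x, (θhat (zhat i) x - θstar (zstar i) x) ^ 2 :=
      le_trans (mul_le_mul_of_nonneg_right hsz (by positivity)) hsum
    have h4 : β * n / k * (Δ ^ 2 / 4) = 2 * ((β * n / (2 * k)) * (Δ ^ 2 / 4)) := by ring
    linarith
  choose f hf using hall
  have hinj : Function.Injective f := by
    intro l l' h
    by_contra hne
    have h1 := hf l
    have h2 := hf l'
    rw [h] at h1
    have htri := vnorm_triangle (θstar l) (θhat (f l')) (θstar l')
    have hs := hsep l l' hne
    have hsymm : vnorm (fun x => θstar l x - θhat (f l') x)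
        = vnorm (fun x => θhat (f l') x - θstar l x) := vnorm_sub_comm _ _
    have hrfl : vnorm (θstar l - θstar l') = vnorm (fun x => θstar l x - θstar l' x) := rfl
    rw [hrfl] at hs
    linarith
  have hbij : Function.Bijective f := Finite.injective_iff_bijective.mp hinj
  refine ⟨Equiv.ofBijective f hbij, ?_, ?_⟩
  · intro i hi
    by_contra hne
    have hφ : (Equiv.ofBijective f hbij) (zstar i) = f (zstar i) := rfl
    rw [hφ] at hne
    obtain ⟨m, hmeq⟩ := hbij.2 (zhat i)
    have hml : m ≠ zstar i := by
      intro hcon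
      rw [hcon] at hmeq
      exact hne hmeq.symm
    have hs := hsep (zstar i) m (Ne.symm hml)
    have htri := vnorm_triangle (θstar (zstar i)) (θhat (zhat i)) (θstar m)
    have hsymm : vnorm (fun x => θstar (zstar i) x - θhat (zhat i) x)
        = vnorm (fun x => θhat (zhat i) x - θstar (zstar i) x) := vnorm_sub_comm _ _
    have h2 := hf m
    rw [hmeq] at h2
    have hrfl : vnorm (θstar (zstar i) - θstar m)
        = vnorm (fun x => θstar (zstar i) x - θstar m x) := rfl
    rw [hrfl] at hs
    linarith
  · have key : ∀ i ∈ Finset.univ.filter (fun i =>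
        Δ / 2 < vnorm (fun x => θhat (zhat i) x - θstar (zstar i) x)),
        Δ ^ 2 / 4 ≤ ∑ x, (θhat (zhat i) x - θstar (zstar i) x) ^ 2 := by
      intro i hi
      simp only [Finset.mem_filter] at hi
      have h2 : (Δ/2)^2 ≤ (vnorm (fun x => θhat (zhat i) x - θstar (zstar i) x))^2 :=
        pow_le_pow_left₀ (by linarith) (le_of_lt hi.2) 2
      rw [vnorm_sq] at h2
      calc Δ ^ 2 / 4 = (Δ/2)^2 := by ring
        _ ≤ _ := h2
    have hsum : ((Finset.univ.filter (fun i =>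
        Δ / 2 < vnorm (fun x => θhat (zhat i) x - θstar (zstar i) x))).card : ℝ) * (Δ ^ 2 / 4)
        ≤ ∑ i, ∑ x, (θhat (zhat i) x - θstar (zstar i) x) ^ 2 := by
      calc _ ≤ ∑ i ∈ Finset.univ.filter (fun i =>
              Δ / 2 < vnorm (fun x => θhat (zhat i) x - θstar (zstar i) x)),
              ∑ x, (θhat (zhat i) x - θstar (zstar i) x) ^ 2 := by
            have := Finset.card_nsmul_le_sum
              (Finset.univ.filter (fun i =>
                Δ / 2 < vnorm (fun x => θhat (zhat i) x - θstar (zstar i) x)))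
              (fun i => ∑ x, (θhat (zhat i) x - θstar (zstar i) x) ^ 2)
              (Δ ^ 2 / 4) key
            rwa [nsmul_eq_mul] at this
        _ ≤ _ := Finset.sum_le_sum_of_subset_of_nonneg (Finset.subset_univ _)
              (fun i _ _ => Finset.sum_nonneg fun x _ => sq_nonneg _)
    rw [le_div_iff₀ (by positivity : (0:ℝ) < Δ ^ 2)]
    nlinarith [hsum]
end
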